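/- arXiv:2004.11761 — 6 statements merged into one kernel-verified Lean document; each statement's English description precedes it below -/
import Mathlib

section
/- Let H be an r-regular graph with 4 ≤ r ≤ |V(H)| − 5. If H is not 3-connected, then the complement of H is 3-connected. -/
/-- A graph is 3-connected if it has at least 4 vertices and removing any set of at most
2 vertices leaves a connected graph. -/
def ThreeConnected {V : Type*} [Fintype V] (G : SimpleGraph V) : Prop :=
  4 ≤ Fintype.card V ∧
    ∀ s : Finset V, s.card ≤ 2 → (G.induce {v : V | v ∉ s}).Connected

theorem stmt_3' {V : Type*} [Fintype V] [DecidableEq V] (H : SimpleGraph V)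
    [DecidableRel H.Adj] (r : ℕ) (hreg : H.IsRegularOfDegree r)
    (hr4 : 4 ≤ r) (hr5 : r + 5 ≤ Fintype.card V)
    (hnc : ¬ (4 ≤ Fintype.card V ∧
      ∀ s : Finset V, s.card ≤ 2 → (H.induce {v : V | v ∉ s}).Connected)) :
    4 ≤ Fintype.card V ∧
      ∀ s : Finset V, s.card ≤ 2 → (Hᶜ.induce {v : V | v ∉ s}).Connected := by
  classical
  have hcard : 9 ≤ Fintype.card V := by omega
  have h4 : 4 ≤ Fintype.card V := by omega
  push_neg at hnc
  obtain ⟨s₀, hs₀2, hsep⟩ := hnc h4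
  set S₀ : Set V := {v : V | v ∉ s₀} with hS₀
  have hex : ∀ (t : Finset V), t.card ≤ 4 → ∃ v : V, v ∉ t := by
    intro t ht
    by_contra h; push_neg at h
    have hsub : Finset.univ ⊆ t := fun v _ => h v
    have := Finset.card_le_card hsub
    simp [Finset.card_univ] at this
    omega
  have hnpre : ¬ (H.induce S₀).Preconnected := by
    intro hp
    obtain ⟨v, hv⟩ := hex s₀ (by omega)
    haveI : Nonempty ↥S₀ := ⟨⟨v, hv⟩⟩
    exact hsep (SimpleGraph.Connected.mk hp)
  rw [SimpleGraph.Preconnected] at hnpre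
  push_neg at hnpre
  obtain ⟨a, b, hab⟩ := hnpre
  set A : Set V := {x : V | ∃ h : x ∈ S₀, (H.induce S₀).Reachable a ⟨x, h⟩} with hA
  have haA : (a : V) ∈ A := ⟨a.2, SimpleGraph.Reachable.refl a⟩
  have hbB : (b : V) ∉ A := by
    rintro ⟨h, hr⟩
    exact hab hr
  -- no H-edges from A to S₀ \ A
  have hAB : ∀ x, x ∈ A → ∀ y, y ∈ S₀ → H.Adj x y → y ∈ A := by
    rintro x ⟨hx0, hxr⟩ y hy hadj
    refine ⟨hy, hxr.trans (SimpleGraph.Adj.reachable ?_)⟩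
    exact hadj
  set B : Set V := {x : V | x ∈ S₀ ∧ x ∉ A} with hB
  have hbB' : (b : V) ∈ B := ⟨b.2, hbB⟩
  -- cardinality bounds
  have hAcard : 3 ≤ A.toFinset.card := by
    have hsub : H.neighborFinset a ⊆ (A.toFinset.erase a) ∪ s₀ := by
      intro y hy
      rw [SimpleGraph.mem_neighborFinset] at hy
      by_cases hys : y ∈ s₀
      · exact Finset.mem_union_right _ hys
      · refine Finset.mem_union_left _ (Finset.mem_erase.2 ⟨hy.ne', ?_⟩)
        rw [Set.mem_toFinset]
        exact hAB a haA y hys hy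
    have h1 := Finset.card_le_card hsub
    have h2 := Finset.card_union_le (A.toFinset.erase a) s₀
    have h3 : (A.toFinset.erase a).card = A.toFinset.card - 1 :=
      Finset.card_erase_of_mem (Set.mem_toFinset.2 haA)
    have h4 := hreg a
    rw [← SimpleGraph.card_neighborFinset_eq_degree] at h4
    have h5 : 1 ≤ A.toFinset.card := Finset.card_pos.2 ⟨a, Set.mem_toFinset.2 haA⟩
    omega
  have hBcard : 3 ≤ B.toFinset.card := by
    have hsub : H.neighborFinset b ⊆ (B.toFinset.erase b) ∪ s₀ := by
      intro y hy
      rw [SimpleGraph.mem_neighborFinset] at hy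
      by_cases hys : y ∈ s₀
      · exact Finset.mem_union_right _ hys
      · refine Finset.mem_union_left _ (Finset.mem_erase.2 ⟨hy.ne', ?_⟩)
        rw [Set.mem_toFinset]
        refine ⟨hys, fun hyA => hbB (hAB y hyA b b.2 hy.symm)⟩
    have h1 := Finset.card_le_card hsub
    have h2 := Finset.card_union_le (B.toFinset.erase b) s₀
    have h3 : (B.toFinset.erase b).card = B.toFinset.card - 1 :=
      Finset.card_erase_of_mem (Set.mem_toFinset.2 hbB')
    have h4 := hreg b
    rw [← SimpleGraph.card_neighborFinset_eq_degree] at h4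
    have h5 : 1 ≤ B.toFinset.card := Finset.card_pos.2 ⟨b, Set.mem_toFinset.2 hbB'⟩
    omega
  refine ⟨h4, ?_⟩
  intro t ht
  set S : Set V := {v : V | v ∉ t} with hS
  -- pick a0 ∈ A \ t and b0 ∈ B \ t
  have hA0 : ∃ a0 : V, a0 ∈ A ∧ a0 ∉ t := by
    have hpos : 0 < (A.toFinset \ t).card := by
      have := Finset.le_card_sdiff t A.toFinset
      omega
    obtain ⟨a0, ha0⟩ := Finset.card_pos.1 hpos
    rw [Finset.mem_sdiff, Set.mem_toFinset] at ha0
    exact ⟨a0, ha0⟩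
  have hB0 : ∃ b0 : V, b0 ∈ B ∧ b0 ∉ t := by
    have hpos : 0 < (B.toFinset \ t).card := by
      have := Finset.le_card_sdiff t B.toFinset
      omega
    obtain ⟨b0, hb0⟩ := Finset.card_pos.1 hpos
    rw [Finset.mem_sdiff, Set.mem_toFinset] at hb0
    exact ⟨b0, hb0⟩
  obtain ⟨a0, ha0A, ha0t⟩ := hA0
  obtain ⟨b0, hb0B, hb0t⟩ := hB0
  -- cross adjacency in the complement
  have hadjC : ∀ (x y : V) (hx : x ∈ S) (hy : y ∈ S), x ∈ A → y ∈ B →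
      (Hᶜ.induce S).Adj ⟨x, hx⟩ ⟨y, hy⟩ := by
    intro x y hx hy hxA hyB
    have hne : x ≠ y := fun h => hyB.2 (h ▸ hxA)
    have hna : ¬ H.Adj x y := fun hadj => hyB.2 (hAB x hxA y hyB.1 hadj)
    exact ⟨hne, hna⟩
  -- every vertex of S not in s₀ reaches a0
  have hreachAB : ∀ (w : V) (hw : w ∈ S), w ∈ S₀ →
      (Hᶜ.induce S).Reachable ⟨w, hw⟩ ⟨a0, ha0t⟩ := by
    intro w hw hws
    by_cases hwA : w ∈ A
    · exact ((hadjC w b0 hw hb0t hwA hb0B).reachable).trans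
        ((hadjC a0 b0 ha0t hb0t ha0A hb0B).reachable.symm)
    · exact (hadjC a0 w ha0t hw ha0A ⟨hws, hwA⟩).reachable.symm
  have hreach : ∀ u : S, (Hᶜ.induce S).Reachable u ⟨a0, ha0t⟩ := by
    rintro ⟨u, hu⟩
    by_cases hus : u ∈ S₀
    · exact hreachAB u hu hus
    · -- u ∈ s₀; find a complement-neighbor outside s₀ ∪ t
      have hus' : u ∈ s₀ := by simpa [hS₀] using hus
      have hN : (Hᶜ.neighborFinset u).card = Fintype.card V - 1 - r := by
        rw [SimpleGraph.card_neighborFinset_eq_degree]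
        exact hreg.compl u
      have hw : ∃ w ∈ Hᶜ.neighborFinset u, w ∉ s₀ ∧ w ∉ t := by
        by_contra hcon
        push_neg at hcon
        have hsub : Hᶜ.neighborFinset u ⊆ (s₀.erase u) ∪ t := by
          intro w hwmem
          rcases Classical.em (w ∈ s₀) with h | h
          · exact Finset.mem_union_left _ (Finset.mem_erase.2
              ⟨(SimpleGraph.ne_of_adj _ ((SimpleGraph.mem_neighborFinset _ _ _).1 hwmem)).symm, h⟩)
          · exact Finset.mem_union_right _ (hcon w hwmem h)
        have h1 := Finset.card_le_card hsub
        have h2 := Finset.card_union_le (s₀.erase u) t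
        have h3 : (s₀.erase u).card = s₀.card - 1 := Finset.card_erase_of_mem hus'
        omega
      obtain ⟨w, hwN, hws₀, hwt⟩ := hw
      have hwadj : Hᶜ.Adj u w := (SimpleGraph.mem_neighborFinset _ _ _).1 hwN
      have hadj' : (Hᶜ.induce S).Adj ⟨u, hu⟩ ⟨w, hwt⟩ := hwadj
      exact hadj'.reachable.trans (hreachAB w hwt hws₀)
  obtain ⟨v, hv⟩ := hex t (by omega)
  haveI : Nonempty ↥S := ⟨⟨v, hv⟩⟩
  exact SimpleGraph.Connected.mk (fun u v => (hreach u).trans (hreach v).symm)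


/-- Let H be an r-regular graph with 4 ≤ r ≤ |V(H)| − 5. If H is not
3-connected, then the complement of H is 3-connected. -/
theorem stmt_3 {V : Type*} [Fintype V] [DecidableEq V] (H : SimpleGraph V)
    [DecidableRel H.Adj] (r : ℕ) (hreg : H.IsRegularOfDegree r)
    (hr4 : 4 ≤ r) (hr5 : r + 5 ≤ Fintype.card V)
    (hnc : ¬ ThreeConnected H) :
    ThreeConnected Hᶜ :=
  stmt_3' H r hreg hr4 hr5 hnc
end

section
/- Let H be a graph whose vertex set is partitioned into the set V_ℓ of minimum-degree vertices and the set V_h of maximum-degree vertices (i.e., V_m = ∅), such that both V_ℓ ∪ V_m and V_h ∪ V_m induce complete graphs. If there exists at least one edge between V_ℓ and V_h, then H is 3-connected (assuming |V(H)| ≥ 12 and H is not regular). -/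
private lemma degsplit {V : Type*} [Fintype V] [DecidableEq V] (H : SimpleGraph V)
    [DecidableRel H.Adj] (A B : Finset V)
    (hcov : ∀ x : V, x ∈ A ∨ x ∈ B)
    (hdisj : ∀ x : V, x ∈ A → x ∉ B)
    (hadjA : ∀ x ∈ A, ∀ y ∈ A, x ≠ y → H.Adj x y)
    (v : V) (hv : v ∈ A) :
    H.degree v = (A.erase v).card + (H.neighborFinset v ∩ B).card := by
  have hset : H.neighborFinset v = A.erase v ∪ (H.neighborFinset v ∩ B) := by
    ext x
    simp only [Finset.mem_union, Finset.mem_erase, Finset.mem_inter,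
      SimpleGraph.mem_neighborFinset]
    constructor
    · intro hadj
      rcases hcov x with hx | hx
      · exact Or.inl ⟨(H.ne_of_adj hadj).symm, hx⟩
      · exact Or.inr ⟨hadj, hx⟩
    · rintro (⟨hne, hx⟩ | ⟨hadj, _⟩)
      · exact hadjA v hv x hx (Ne.symm hne)
      · exact hadj
  have hd : Disjoint (A.erase v) (H.neighborFinset v ∩ B) :=
    Finset.disjoint_left.2 fun x hx hx2 =>
      hdisj x (Finset.mem_of_mem_erase hx) (Finset.mem_inter.1 hx2).2
  calc H.degree v = (A.erase v ∪ (H.neighborFinset v ∩ B)).card :=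
        congrArg Finset.card hset
    _ = (A.erase v).card + (H.neighborFinset v ∩ B).card :=
        Finset.card_union_of_disjoint hd

/-- Let H be a non-regular graph on at least 12 vertices whose vertex set
is partitioned into the set V_ℓ of minimum-degree vertices and the set V_h of
maximum-degree vertices (V_m = ∅), such that both V_ℓ and V_h induce complete graphs.
If there exists at least one edge between V_ℓ and V_h, then H is 3-connected. -/
theorem stmt_5 {V : Type*} [Fintype V] [DecidableEq V] (H : SimpleGraph V)
    [DecidableRel H.Adj]
    (h12 : 12 ≤ Fintype.card V)
    (hnonreg : H.minDegree < H.maxDegree)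
    (hVm : ∀ v : V, H.degree v = H.minDegree ∨ H.degree v = H.maxDegree)
    (hclL : H.IsClique {v : V | H.degree v = H.minDegree})
    (hclH : H.IsClique {v : V | H.degree v = H.maxDegree})
    (hedge : ∃ u w : V, H.degree u = H.minDegree ∧ H.degree w = H.maxDegree ∧ H.Adj u w) :
    ThreeConnected H := by
  classical
  set Lf : Finset V := Finset.univ.filter (fun v => H.degree v = H.minDegree) with hLfdef
  set Hf : Finset V := Finset.univ.filter (fun v => H.degree v = H.maxDegree) with hHfdef
  have hmemL : ∀ v : V, v ∈ Lf ↔ H.degree v = H.minDegree := by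
    intro v; simp [hLfdef]
  have hmemH : ∀ v : V, v ∈ Hf ↔ H.degree v = H.maxDegree := by
    intro v; simp [hHfdef]
  have hcov : ∀ x : V, x ∈ Lf ∨ x ∈ Hf := by
    intro x
    rcases hVm x with h | h
    · exact Or.inl ((hmemL x).2 h)
    · exact Or.inr ((hmemH x).2 h)
  have hdisjLH : ∀ x : V, x ∈ Lf → x ∉ Hf := by
    intro x hx hx2
    have h1 := (hmemL x).1 hx
    have h2 := (hmemH x).1 hx2
    omega
  have hdisjHL : ∀ x : V, x ∈ Hf → x ∉ Lf := by
    intro x hx hx2; exact hdisjLH x hx2 hx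
  have hadjL : ∀ x ∈ Lf, ∀ y ∈ Lf, x ≠ y → H.Adj x y := by
    intro x hx y hy hxy
    exact hclL ((hmemL x).1 hx) ((hmemL y).1 hy) hxy
  have hadjH : ∀ x ∈ Hf, ∀ y ∈ Hf, x ≠ y → H.Adj x y := by
    intro x hx y hy hxy
    exact hclH ((hmemH x).1 hx) ((hmemH y).1 hy) hxy
  have hdegL := degsplit H Lf Hf hcov hdisjLH hadjL
  have hdegH := degsplit H Hf Lf (fun x => (hcov x).symm) hdisjHL hadjH
  have hcardsum : Lf.card + Hf.card = Fintype.card V := by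
    rw [← Finset.card_union_of_disjoint (Finset.disjoint_left.2 hdisjLH)]
    have : Lf ∪ Hf = Finset.univ := by
      ext x; simpa using hcov x
    rw [this, Finset.card_univ]
  -- p is constant on Lf, q constant on Hf
  have hpconst : ∀ u ∈ Lf, ∀ v ∈ Lf,
      (H.neighborFinset u ∩ Hf).card = (H.neighborFinset v ∩ Hf).card := by
    intro u hu v hv
    have h1 := hdegL u hu
    have h2 := hdegL v hv
    rw [(hmemL u).1 hu, Finset.card_erase_of_mem hu] at h1
    rw [(hmemL v).1 hv, Finset.card_erase_of_mem hv] at h2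
    omega
  have hqconst : ∀ u ∈ Hf, ∀ v ∈ Hf,
      (H.neighborFinset u ∩ Lf).card = (H.neighborFinset v ∩ Lf).card := by
    intro u hu v hv
    have h1 := hdegH u hu
    have h2 := hdegH v hv
    rw [(hmemH u).1 hu, Finset.card_erase_of_mem hu] at h1
    rw [(hmemH v).1 hv, Finset.card_erase_of_mem hv] at h2
    omega
  obtain ⟨u0, w0, hu0d, hw0d, huw0⟩ := hedge
  have hu0L : u0 ∈ Lf := (hmemL u0).2 hu0d
  have hw0H : w0 ∈ Hf := (hmemH w0).2 hw0d
  have hpne : ∀ v ∈ Lf, (H.neighborFinset v ∩ Hf).Nonempty := by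
    intro v hv
    rw [← Finset.card_pos, hpconst v hv u0 hu0L, Finset.card_pos]
    exact ⟨w0, Finset.mem_inter.2 ⟨(H.mem_neighborFinset u0 w0).2 huw0, hw0H⟩⟩
  have hqne : ∀ v ∈ Hf, (H.neighborFinset v ∩ Lf).Nonempty := by
    intro v hv
    rw [← Finset.card_pos, hqconst v hv w0 hw0H, Finset.card_pos]
    exact ⟨u0, Finset.mem_inter.2 ⟨(H.mem_neighborFinset w0 u0).2 huw0.symm, hu0L⟩⟩
  refine ⟨by omega, ?_⟩
  intro s hs
  rw [SimpleGraph.connected_iff]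
  set G' := H.induce {v : V | v ∉ s} with hG'
  have hadj' : ∀ x y : {v : V | v ∉ s}, H.Adj ↑x ↑y → G'.Reachable x y := by
    intro x y h
    exact SimpleGraph.Adj.reachable (by simpa [hG'] using h)
  have hsameL : ∀ x y : {v : V | v ∉ s}, (↑x : V) ∈ Lf → (↑y : V) ∈ Lf →
      G'.Reachable x y := by
    intro x y hx hy
    rcases eq_or_ne x y with rfl | hne
    · exact SimpleGraph.Reachable.refl x
    · exact hadj' x y (hadjL _ hx _ hy (fun h => hne (Subtype.ext h)))
  have hsameH : ∀ x y : {v : V | v ∉ s}, (↑x : V) ∈ Hf → (↑y : V) ∈ Hf →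
      G'.Reachable x y := by
    intro x y hx hy
    rcases eq_or_ne x y with rfl | hne
    · exact SimpleGraph.Reachable.refl x
    · exact hadj' x y (hadjH _ hx _ hy (fun h => hne (Subtype.ext h)))
  constructor
  · -- preconnected
    by_cases hL : (Lf \ s).Nonempty
    · by_cases hH : (Hf \ s).Nonempty
      · -- there is a surviving cross edge
        have hsurv : ∃ u w : V, u ∉ s ∧ w ∉ s ∧ u ∈ Lf ∧ w ∈ Hf ∧ H.Adj u w := by
          by_contra hno
          push_neg at hno
          obtain ⟨x0, hx0⟩ := hL
          obtain ⟨y0, hy0⟩ := hH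
          rw [Finset.mem_sdiff] at hx0 hy0
          have hTsub : H.neighborFinset x0 ∩ Hf ⊆ s ∩ Hf := by
            intro w hw
            rw [Finset.mem_inter] at hw ⊢
            refine ⟨?_, hw.2⟩
            by_contra hws
            exact hno x0 w hx0.2 hws hx0.1 hw.2 ((H.mem_neighborFinset x0 w).1 hw.1)
          have hSsub : H.neighborFinset y0 ∩ Lf ⊆ s ∩ Lf := by
            intro u hu
            rw [Finset.mem_inter] at hu ⊢
            refine ⟨?_, hu.2⟩
            by_contra hus
            exact hno u y0 hus hy0.2 hu.2 hy0.1 ((H.mem_neighborFinset y0 u).1 hu.1).symm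
          have h1 : 1 ≤ (s ∩ Hf).card :=
            le_trans (Finset.card_pos.2 (hpne x0 hx0.1)) (Finset.card_le_card hTsub)
          have h2 : 1 ≤ (s ∩ Lf).card :=
            le_trans (Finset.card_pos.2 (hqne y0 hy0.1)) (Finset.card_le_card hSsub)
          have hds : Disjoint (s ∩ Lf) (s ∩ Hf) := by
            refine Finset.disjoint_left.2 fun x hx hx2 => ?_
            exact hdisjLH x (Finset.mem_inter.1 hx).2 (Finset.mem_inter.1 hx2).2
          have hsum : (s ∩ Lf).card + (s ∩ Hf).card ≤ 2 := by
            rw [← Finset.card_union_of_disjoint hds]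
            calc ((s ∩ Lf) ∪ (s ∩ Hf)).card ≤ s.card := by
                  apply Finset.card_le_card
                  intro x hx
                  rcases Finset.mem_union.1 hx with h | h
                  · exact (Finset.mem_inter.1 h).1
                  · exact (Finset.mem_inter.1 h).1
              _ ≤ 2 := hs
          have hT1 : (s ∩ Hf).card = 1 := by omega
          have hS1 : (s ∩ Lf).card = 1 := by omega
          obtain ⟨t0, ht0⟩ := Finset.card_eq_one.1 hT1
          obtain ⟨u1, hu1⟩ := Finset.card_eq_one.1 hS1
          have ht0H : t0 ∈ Hf := by
            have : t0 ∈ s ∩ Hf := ht0 ▸ Finset.mem_singleton_self t0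
            exact (Finset.mem_inter.1 this).2
          have hu1L : u1 ∈ Lf := by
            have : u1 ∈ s ∩ Lf := hu1 ▸ Finset.mem_singleton_self u1
            exact (Finset.mem_inter.1 this).2
          -- every surviving L vertex is adjacent to t0
          have hLsub : Lf \ s ⊆ H.neighborFinset t0 ∩ Lf := by
            intro x hx
            rw [Finset.mem_sdiff] at hx
            obtain ⟨w, hw⟩ := hpne x hx.1
            rw [Finset.mem_inter] at hw
            have hws : w ∈ s := by
              by_contra hws
              exact hno x w hx.2 hws hx.1 hw.2 ((H.mem_neighborFinset x w).1 hw.1)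
            have : w ∈ s ∩ Hf := Finset.mem_inter.2 ⟨hws, hw.2⟩
            rw [ht0, Finset.mem_singleton] at this
            subst this
            exact Finset.mem_inter.2
              ⟨(H.mem_neighborFinset w x).2 ((H.mem_neighborFinset x w).1 hw.1).symm, hx.1⟩
          have hHsub : Hf \ s ⊆ H.neighborFinset u1 ∩ Hf := by
            intro y hy
            rw [Finset.mem_sdiff] at hy
            obtain ⟨u, hu⟩ := hqne y hy.1
            rw [Finset.mem_inter] at hu
            have hus : u ∈ s := by
              by_contra hus
              exact hno u y hus hy.2 hu.2 hy.1 ((H.mem_neighborFinset y u).1 hu.1).symm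
            have : u ∈ s ∩ Lf := Finset.mem_inter.2 ⟨hus, hu.2⟩
            rw [hu1, Finset.mem_singleton] at this
            subst this
            exact Finset.mem_inter.2
              ⟨(H.mem_neighborFinset u y).2 ((H.mem_neighborFinset y u).1 hu.1).symm, hy.1⟩
          have hcardL : (Lf \ s).card ≤ 1 :=
            calc (Lf \ s).card ≤ (H.neighborFinset t0 ∩ Lf).card :=
                  Finset.card_le_card hLsub
              _ = (H.neighborFinset y0 ∩ Lf).card := hqconst t0 ht0H y0 hy0.1
              _ ≤ (s ∩ Lf).card := Finset.card_le_card hSsub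
              _ = 1 := hS1
          have hcardH : (Hf \ s).card ≤ 1 :=
            calc (Hf \ s).card ≤ (H.neighborFinset u1 ∩ Hf).card :=
                  Finset.card_le_card hHsub
              _ = (H.neighborFinset x0 ∩ Hf).card := hpconst u1 hu1L x0 hx0.1
              _ ≤ (s ∩ Hf).card := Finset.card_le_card hTsub
              _ = 1 := hT1
          have hLle : Lf.card ≤ (Lf \ s).card + (s ∩ Lf).card := by
            have : Lf ⊆ (Lf \ s) ∪ (s ∩ Lf) := by
              intro x hx
              by_cases hxs : x ∈ s
              · exact Finset.mem_union.2 (Or.inr (Finset.mem_inter.2 ⟨hxs, hx⟩))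
              · exact Finset.mem_union.2 (Or.inl (Finset.mem_sdiff.2 ⟨hx, hxs⟩))
            exact le_trans (Finset.card_le_card this) (Finset.card_union_le _ _)
          have hHle : Hf.card ≤ (Hf \ s).card + (s ∩ Hf).card := by
            have : Hf ⊆ (Hf \ s) ∪ (s ∩ Hf) := by
              intro x hx
              by_cases hxs : x ∈ s
              · exact Finset.mem_union.2 (Or.inr (Finset.mem_inter.2 ⟨hxs, hx⟩))
              · exact Finset.mem_union.2 (Or.inl (Finset.mem_sdiff.2 ⟨hx, hxs⟩))
            exact le_trans (Finset.card_le_card this) (Finset.card_union_le _ _)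
          omega
        obtain ⟨u, w, hus, hws, huL, hwH, huw⟩ := hsurv
        have hu' : u ∈ {v : V | v ∉ s} := hus
        have hw' : w ∈ {v : V | v ∉ s} := hws
        have hstep : ∀ x : {v : V | v ∉ s}, G'.Reachable x ⟨u, hu'⟩ := by
          intro x
          rcases hcov ↑x with hx | hx
          · exact hsameL x ⟨u, hu'⟩ hx huL
          · exact (hsameH x ⟨w, hw'⟩ hx hwH).trans (hadj' ⟨w, hw'⟩ ⟨u, hu'⟩ huw.symm)
        intro x y
        exact (hstep x).trans (hstep y).symm
      · -- all surviving vertices are in Lf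
        intro x y
        have hx : (↑x : V) ∈ Lf := by
          rcases hcov ↑x with h | h
          · exact h
          · exact absurd ⟨↑x, Finset.mem_sdiff.2 ⟨h, x.2⟩⟩ hH
        have hy : (↑y : V) ∈ Lf := by
          rcases hcov ↑y with h | h
          · exact h
          · exact absurd ⟨↑y, Finset.mem_sdiff.2 ⟨h, y.2⟩⟩ hH
        exact hsameL x y hx hy
    · -- all surviving vertices are in Hf
      intro x y
      have hx : (↑x : V) ∈ Hf := by
        rcases hcov ↑x with h | h
        · exact absurd ⟨↑x, Finset.mem_sdiff.2 ⟨h, x.2⟩⟩ hL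
        · exact h
      have hy : (↑y : V) ∈ Hf := by
        rcases hcov ↑y with h | h
        · exact absurd ⟨↑y, Finset.mem_sdiff.2 ⟨h, y.2⟩⟩ hL
        · exact h
      exact hsameH x y hx hy
  · -- nonempty
    have hne : (sᶜ : Finset V).Nonempty := by
      rw [← Finset.card_pos, Finset.card_compl]
      omega
    obtain ⟨v, hv⟩ := hne
    exact ⟨⟨v, by simpa using hv⟩⟩
end

section
/- There is no non-regular graph H such that H − V_ℓ is an empty graph and H − V_h is a complete graph. -/
/-- A set of vertices is independent if no two of its members are adjacent. -/
def IsIndepSet {V : Type*} (G : SimpleGraph V) (s : Set V) : Prop :=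
  s.Pairwise fun a b => ¬ G.Adj a b

/-- There is no non-regular graph H such that H − V_ℓ is an empty graph
and H − V_h is a complete graph. -/
theorem stmt_7 {V : Type*} [Fintype V] [DecidableEq V] (H : SimpleGraph V)
    [DecidableRel H.Adj]
    (hnonreg : H.minDegree < H.maxDegree)
    (hempty : IsIndepSet H {v : V | H.degree v ≠ H.minDegree})
    (hcomplete : H.IsClique {v : V | H.degree v ≠ H.maxDegree}) :
    False := by
  haveI : Nonempty V := by
    by_contra h
    rw [not_nonempty_iff] at h
    have h1 : H.minDegree = 0 := by
      simp [SimpleGraph.minDegree, Finset.univ_eq_empty]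
    have h2 : H.maxDegree = 0 := by
      simp [SimpleGraph.maxDegree, Finset.univ_eq_empty]
    omega
  obtain ⟨w, hw⟩ := H.exists_maximal_degree_vertex
  -- every neighbor of w has minimum degree
  have hnbr : ∀ x, H.Adj w x → H.degree x = H.minDegree := by
    intro x hadj
    by_contra hx
    have hwmem : w ∈ {v : V | H.degree v ≠ H.minDegree} := by
      simp only [Set.mem_setOf_eq, ← hw]; omega
    exact hempty (hx : x ∈ {v : V | H.degree v ≠ H.minDegree}) hwmem
      (H.ne_of_adj hadj).symm hadj.symm
  -- w has a neighbor u
  have hdegpos : 0 < H.degree w := by omega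
  rw [← SimpleGraph.card_neighborFinset_eq_degree, Finset.card_pos] at hdegpos
  obtain ⟨u, hu⟩ := hdegpos
  rw [SimpleGraph.mem_neighborFinset] at hu
  have hudeg : H.degree u = H.minDegree := hnbr u hu
  have huC : u ∈ {v : V | H.degree v ≠ H.maxDegree} := by
    simp only [Set.mem_setOf_eq, hudeg]; omega
  -- neighbors of u include w and all neighbors of w except u
  have hsub : (H.neighborFinset w).erase u ∪ {w} ⊆ H.neighborFinset u := by
    intro x hx
    rw [SimpleGraph.mem_neighborFinset]
    rcases Finset.mem_union.mp hx with hx | hx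
    · obtain ⟨hxu, hxw⟩ := Finset.mem_erase.mp hx
      rw [SimpleGraph.mem_neighborFinset] at hxw
      have hxC : x ∈ {v : V | H.degree v ≠ H.maxDegree} := by
        simp only [Set.mem_setOf_eq, hnbr x hxw]; omega
      exact hcomplete huC hxC (Ne.symm hxu)
    · rw [Finset.mem_singleton] at hx
      subst hx
      exact hu.symm
  have hwne : w ∉ (H.neighborFinset w).erase u := by
    intro hmem
    have := (Finset.mem_erase.mp hmem).2
    rw [SimpleGraph.mem_neighborFinset] at this
    exact H.irrefl this
  have hcard : ((H.neighborFinset w).erase u ∪ {w}).card = H.degree w := by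
    rw [Finset.card_union_of_disjoint (by simpa using hwne),
      Finset.card_erase_of_mem (by simpa using hu), Finset.card_singleton,
      SimpleGraph.card_neighborFinset_eq_degree]
    have : 0 < H.degree w := by omega
    rw [← SimpleGraph.card_neighborFinset_eq_degree] at this ⊢
    omega
  have := Finset.card_le_card hsub
  rw [hcard, SimpleGraph.card_neighborFinset_eq_degree] at this
  omega
end

section
/- Let H be a graph with at least 12 vertices whose vertex set is partitioned into sets A and B with |A|, |B| ≥ 3, such that: the subgraphs induced on A and on B each have at most one edge; all vertices in A have the same degree r ≥ 1 and all vertices in B have the same degree s ≥ 1; every vertex of A has a non-neighbor in B; and every vertex of B has a non-neighbor in A. Then the complement of H is 3-connected. -/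
open Finset

/-- Within a set `C` spanning at most one edge of `H`, any two surviving vertices are
reachable in the induced complement, provided at least 3 vertices of `C` survive. -/
lemma reach_within {V : Type*} [Fintype V] [DecidableEq V] (H : SimpleGraph V)
    (K C : Finset V) (hC : 3 ≤ (C \ K).card)
    (hone : ∀ a b a' b' : V, a ∈ C → b ∈ C → a' ∈ C → b' ∈ C →
      H.Adj a b → H.Adj a' b' → s(a, b) = s(a', b'))
    (x y : V) (hx : x ∈ C) (hy : y ∈ C) (hx' : x ∉ K) (hy' : y ∉ K) :
    (Hᶜ.induce {v : V | v ∉ K}).Reachable ⟨x, hx'⟩ ⟨y, hy'⟩ := by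
  rcases eq_or_ne x y with rfl | hne
  · exact SimpleGraph.Reachable.refl _
  by_cases hadj : H.Adj x y
  · -- find a third vertex
    have hcard : 0 < ((C \ K) \ {x, y}).card := by
      have h1 := Finset.le_card_sdiff ({x, y} : Finset V) (C \ K)
      have h2 : ({x, y} : Finset V).card ≤ 2 := Finset.card_insert_le _ _ |>.trans (by simp)
      omega
    obtain ⟨z, hz⟩ := Finset.card_pos.mp hcard
    rw [Finset.mem_sdiff, Finset.mem_sdiff] at hz
    obtain ⟨⟨hzC, hzK⟩, hzxy⟩ := hz
    simp only [Finset.mem_insert, Finset.mem_singleton, not_or] at hzxy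
    obtain ⟨hzx, hzy⟩ := hzxy
    have h1 : ¬ H.Adj x z := by
      intro h
      have := hone x z x y hx hzC hx hy h hadj
      rw [Sym2.eq_iff] at this
      rcases this with ⟨_, h2⟩ | ⟨h2, _⟩
      · exact hzy h2
      · exact hne h2
    have h2 : ¬ H.Adj z y := by
      intro h
      have := hone z y x y hzC hy hx hy h hadj
      rw [Sym2.eq_iff] at this
      rcases this with ⟨h2, _⟩ | ⟨h2, _⟩
      · exact hzx h2
      · exact hzy h2
    have e1 : (Hᶜ.induce {v : V | v ∉ K}).Adj ⟨x, hx'⟩ ⟨z, hzK⟩ := ⟨Ne.symm hzx, h1⟩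
    have e2 : (Hᶜ.induce {v : V | v ∉ K}).Adj ⟨z, hzK⟩ ⟨y, hy'⟩ := ⟨hzy, h2⟩
    exact e1.reachable.trans e2.reachable
  · exact SimpleGraph.Adj.reachable ⟨hne, hadj⟩

lemma key {V : Type*} [Fintype V] [DecidableEq V] (H : SimpleGraph V) [DecidableRel H.Adj]
    (A B : Finset V) (hunion : A ∪ B = Finset.univ) (hdisj : Disjoint A B)
    (hA : 3 ≤ A.card) (hB : 6 ≤ B.card)
    (hAone : ∀ a b a' b' : V, a ∈ A → b ∈ A → a' ∈ A → b' ∈ A →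
      H.Adj a b → H.Adj a' b' → s(a, b) = s(a', b'))
    (hBone : ∀ a b a' b' : V, a ∈ B → b ∈ B → a' ∈ B → b' ∈ B →
      H.Adj a b → H.Adj a' b' → s(a, b) = s(a', b'))
    (r : ℕ) (hdA : ∀ a ∈ A, H.degree a = r)
    (hnA : ∀ a ∈ A, ∃ b ∈ B, ¬ H.Adj a b)
    (hnB : ∀ b ∈ B, ∃ a ∈ A, ¬ H.Adj b a)
    (K : Finset V) (hK : K.card ≤ 2) :
    (Hᶜ.induce {v : V | v ∉ K}).Connected := by
  have hmem : ∀ v : V, v ∈ A ∨ v ∈ B := by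
    intro v
    have : v ∈ A ∪ B := hunion ▸ Finset.mem_univ v
    exact Finset.mem_union.mp this
  have hne : ∀ {a b : V}, a ∈ A → b ∈ B → a ≠ b := by
    intro a b ha hb h
    exact Finset.disjoint_left.mp hdisj ha (h ▸ hb)
  -- at most one neighbor inside A
  have honeA : ∀ x y z : V, x ∈ A → y ∈ A → z ∈ A → H.Adj x y → H.Adj x z → y = z := by
    intro x y z hx hy hz h1 h2
    have := hAone x y x z hx hy hx hz h1 h2
    rw [Sym2.eq_iff] at this
    rcases this with ⟨_, h⟩ | ⟨h, _⟩
    · exact h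
    · exact absurd h2 (h ▸ H.irrefl)
  -- r < |B|
  have rle : r < B.card := by
    -- find a vertex of A with no neighbor inside A
    have ha0 : ∃ a0 ∈ A, ∀ y ∈ A, ¬ H.Adj a0 y := by
      by_contra hcon
      push_neg at hcon
      obtain ⟨x, hx⟩ := Finset.card_pos.mp (show 0 < A.card by omega)
      obtain ⟨y, hy⟩ := Finset.card_pos.mp
        (show 0 < (A.erase x).card by rw [Finset.card_erase_of_mem hx]; omega)
      obtain ⟨z, hz⟩ := Finset.card_pos.mp
        (show 0 < ((A.erase x).erase y).card by
          rw [Finset.card_erase_of_mem hy, Finset.card_erase_of_mem hx]; omega)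
      obtain ⟨hzy, hz'⟩ := Finset.mem_erase.mp hz
      obtain ⟨hzx, hzA⟩ := Finset.mem_erase.mp hz'
      obtain ⟨hyx, hyA⟩ := Finset.mem_erase.mp hy
      obtain ⟨nx, hnxA, hnx⟩ := hcon x hx
      obtain ⟨ny, hnyA, hny⟩ := hcon y hyA
      obtain ⟨nz, hnzA, hnz⟩ := hcon z hzA
      have e1 := hAone y ny x nx hyA hnyA hx hnxA hny hnx
      have e2 := hAone z nz x nx hzA hnzA hx hnxA hnz hnx
      rw [Sym2.eq_iff] at e1 e2
      have hynx : y = nx := by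
        rcases e1 with ⟨h, _⟩ | ⟨h, _⟩
        · exact absurd h hyx
        · exact h
      have hznx : z = nx := by
        rcases e2 with ⟨h, _⟩ | ⟨h, _⟩
        · exact absurd h hzx
        · exact h
      exact hzy (hznx.trans hynx.symm)
    obtain ⟨a0, ha0A, ha0⟩ := ha0
    obtain ⟨bs, hbsB, hbs⟩ := hnA a0 ha0A
    have hsub : H.neighborFinset a0 ⊆ B.erase bs := by
      intro v hv
      rw [SimpleGraph.mem_neighborFinset] at hv
      rcases hmem v with hvA | hvB
      · exact absurd hv (ha0 v hvA)
      · refine Finset.mem_erase.mpr ⟨?_, hvB⟩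
        rintro rfl; exact hbs hv
    have := Finset.card_le_card hsub
    rw [Finset.card_erase_of_mem hbsB] at this
    have hdeg := hdA a0 ha0A
    rw [SimpleGraph.degree] at hdeg
    omega
  have hB'4 : 4 ≤ (B \ K).card := by
    have := Finset.le_card_sdiff K B
    omega
  -- Claim 1': some surviving vertex of A has a surviving complement-neighbor in B
  have hgood : ∃ a2 ∈ A, a2 ∉ K ∧ ∃ b ∈ B, b ∉ K ∧ ¬ H.Adj a2 b := by
    by_contra hcon
    push_neg at hcon
    -- hcon : ∀ a2 ∈ A, a2 ∉ K → ∀ b ∈ B, b ∉ K → H.Adj a2 b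
    obtain ⟨a1, ha1⟩ := Finset.card_pos.mp (show 0 < (A \ K).card by
      have := Finset.le_card_sdiff K A; omega)
    obtain ⟨ha1A, ha1K⟩ := Finset.mem_sdiff.mp ha1
    obtain ⟨bs, hbsB, hbs⟩ := hnA a1 ha1A
    have hbsK : bs ∈ K := by
      by_contra h
      exact hbs (hcon a1 ha1A ha1K bs hbsB h)
    obtain ⟨b1, hb1⟩ := Finset.card_pos.mp (show 0 < (B \ K).card by omega)
    obtain ⟨hb1B, hb1K⟩ := Finset.mem_sdiff.mp hb1
    obtain ⟨x, hxA, hx⟩ := hnB b1 hb1B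
    have hxK : x ∈ K := by
      by_contra h
      exact hx (hcon x hxA h b1 hb1B hb1K).symm
    -- every element of K that is in A equals x
    have hKA : ∀ a ∈ K, a ∈ A → a = x := by
      intro a haK haA
      by_contra hax
      have hsub : ({a, x, bs} : Finset V) ⊆ K := by
        intro v hv
        simp only [Finset.mem_insert, Finset.mem_singleton] at hv
        rcases hv with rfl | rfl | rfl
        · exact haK
        · exact hxK
        · exact hbsK
      have hc : ({a, x, bs} : Finset V).card = 3 := by
        rw [Finset.card_insert_of_notMem, Finset.card_insert_of_notMem,
          Finset.card_singleton]
        · simp [hne hxA hbsB]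
        · simp [hax, hne haA hbsB]
      have := Finset.card_le_card hsub
      omega
    -- x is non-adjacent to every surviving vertex of B
    have hxall : ∀ b ∈ B, b ∉ K → ¬ H.Adj x b := by
      intro b hbB hbK hadj
      obtain ⟨a', ha'A, ha'⟩ := hnB b hbB
      have ha'K : a' ∈ K := by
        by_contra h
        exact ha' (hcon a' ha'A h b hbB hbK).symm
      have : a' = x := hKA a' ha'K ha'A
      exact ha' (this ▸ hadj.symm)
    -- degree of x is at most 2
    have hnbr : H.neighborFinset x ⊆ (A ∩ H.neighborFinset x) ∪ (K ∩ B) := by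
      intro v hv
      have hv' := hv
      rw [SimpleGraph.mem_neighborFinset] at hv'
      rcases hmem v with hvA | hvB
      · exact Finset.mem_union_left _ (Finset.mem_inter.mpr ⟨hvA, hv⟩)
      · refine Finset.mem_union_right _ (Finset.mem_inter.mpr ⟨?_, hvB⟩)
        by_contra h
        exact hxall v hvB h hv'
    have hA1 : (A ∩ H.neighborFinset x).card ≤ 1 := by
      refine Finset.card_le_one.mpr ?_
      intro u hu v hv
      obtain ⟨huA, hu'⟩ := Finset.mem_inter.mp hu
      obtain ⟨hvA, hv'⟩ := Finset.mem_inter.mp hv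
      rw [SimpleGraph.mem_neighborFinset] at hu' hv'
      exact honeA x u v hxA huA hvA hu' hv'
    have hKB1 : (K ∩ B).card ≤ 1 := by
      have hsub : K ∩ B ⊆ K.erase x := by
        intro v hv
        obtain ⟨hvK, hvB⟩ := Finset.mem_inter.mp hv
        exact Finset.mem_erase.mpr ⟨fun h => hne hxA hvB h.symm, hvK⟩
      have := Finset.card_le_card hsub
      rw [Finset.card_erase_of_mem hxK] at this
      omega
    have hdegx : H.degree x ≤ 2 := by
      have h1 := Finset.card_le_card hnbr
      have h2 := Finset.card_union_le (A ∩ H.neighborFinset x) (K ∩ B)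
      rw [SimpleGraph.degree]
      omega
    -- but a1 is adjacent to all of B \ K, so degree a1 ≥ 4
    have hdega1 : 4 ≤ H.degree a1 := by
      have hsub : B \ K ⊆ H.neighborFinset a1 := by
        intro v hv
        obtain ⟨hvB, hvK⟩ := Finset.mem_sdiff.mp hv
        rw [SimpleGraph.mem_neighborFinset]
        exact hcon a1 ha1A ha1K v hvB hvK
      have := Finset.card_le_card hsub
      rw [SimpleGraph.degree]
      omega
    rw [hdA x hxA] at hdegx
    rw [hdA a1 ha1A] at hdega1
    omega
  -- now build connectivity
  obtain ⟨b0, hb0⟩ := Finset.card_pos.mp (show 0 < (B \ K).card by omega)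
  obtain ⟨hb0B, hb0K⟩ := Finset.mem_sdiff.mp hb0
  have hub : ∀ w : {v : V | v ∉ K}, (Hᶜ.induce {v : V | v ∉ K}).Reachable w ⟨b0, hb0K⟩ := by
    rintro ⟨w, hw⟩
    have hwK : w ∉ K := hw
    rcases hmem w with hwA | hwB
    · by_cases hfind : ∃ b ∈ B, b ∉ K ∧ ¬ H.Adj w b
      · obtain ⟨b, hbB, hbK, hnadj⟩ := hfind
        have e : (Hᶜ.induce {v : V | v ∉ K}).Adj ⟨w, hwK⟩ ⟨b, hbK⟩ := ⟨hne hwA hbB, hnadj⟩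
        exact e.reachable.trans (reach_within H K B (by omega) hBone b b0 hbB hb0B hbK hb0K)
      · push_neg at hfind
        obtain ⟨a2, ha2A, ha2K, b2, hb2B, hb2K, hnadj2⟩ := hgood
        have hwa2 : w ≠ a2 := by
          rintro rfl
          exact hnadj2 (hfind b2 hb2B hb2K)
        have step2 : (Hᶜ.induce {v : V | v ∉ K}).Reachable ⟨a2, ha2K⟩ ⟨b0, hb0K⟩ := by
          have e : (Hᶜ.induce {v : V | v ∉ K}).Adj ⟨a2, ha2K⟩ ⟨b2, hb2K⟩ :=
            ⟨hne ha2A hb2B, hnadj2⟩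
          exact e.reachable.trans
            (reach_within H K B (by omega) hBone b2 b0 hb2B hb0B hb2K hb0K)
        by_cases hA3 : 3 ≤ (A \ K).card
        · exact (reach_within H K A hA3 hAone w a2 hwA ha2A hwK ha2K).trans step2
        · by_cases hadj : H.Adj w a2
          · exfalso
            have h1 : (A \ K).card + (A ∩ K).card = A.card :=
              Finset.card_sdiff_add_card_inter A K
            have h2 : (B \ K).card + (B ∩ K).card = B.card :=
              Finset.card_sdiff_add_card_inter B K
            have h3 : (A ∩ K).card + (B ∩ K).card ≤ K.card := by
              have hd : Disjoint (A ∩ K) (B ∩ K) :=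
                hdisj.mono (Finset.inter_subset_left) (Finset.inter_subset_left)
              have hsub : (A ∩ K) ∪ (B ∩ K) ⊆ K :=
                Finset.union_subset Finset.inter_subset_right Finset.inter_subset_right
              have := Finset.card_le_card hsub
              rw [Finset.card_union_of_disjoint hd] at this
              exact this
            -- so (B \ K).card ≥ B.card - 1
            have hdegw : B.card ≤ H.degree w := by
              have hsub : insert a2 (B \ K) ⊆ H.neighborFinset w := by
                intro v hv
                rw [Finset.mem_insert] at hv
                rw [SimpleGraph.mem_neighborFinset]
                rcases hv with rfl | hv
                · exact hadj
                · obtain ⟨hvB, hvK⟩ := Finset.mem_sdiff.mp hv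
                  exact hfind v hvB hvK
              have hc := Finset.card_le_card hsub
              rw [Finset.card_insert_of_notMem (by
                intro h
                exact hne ha2A (Finset.mem_sdiff.mp h).1 rfl)] at hc
              rw [SimpleGraph.degree]
              omega
            rw [hdA w hwA] at hdegw
            omega
          · have e : (Hᶜ.induce {v : V | v ∉ K}).Adj ⟨w, hwK⟩ ⟨a2, ha2K⟩ := ⟨hwa2, hadj⟩
            exact e.reachable.trans step2
    · exact reach_within H K B (by omega) hBone w b0 hwB hb0B hwK hb0K
  haveI : Nonempty {v : V | v ∉ K} := ⟨⟨b0, hb0K⟩⟩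
  exact ⟨fun u v => (hub u).trans (hub v).symm⟩

/-- Let H be a graph with at least 12 vertices whose vertex set is
partitioned into sets A and B with |A|, |B| ≥ 3, such that the subgraphs induced on A
and on B each have at most one edge; all vertices in A have the same degree r ≥ 1 and
all vertices in B have the same degree s ≥ 1; every vertex of A has a non-neighbor in
B; and every vertex of B has a non-neighbor in A.  Then the complement of H is
3-connected. -/
theorem stmt_9 {V : Type*} [Fintype V] [DecidableEq V] (H : SimpleGraph V)
    [DecidableRel H.Adj]
    (h12 : 12 ≤ Fintype.card V)
    (A B : Finset V) (hunion : A ∪ B = Finset.univ) (hdisj : Disjoint A B)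
    (hA : 3 ≤ A.card) (hB : 3 ≤ B.card)
    (hAone : ∀ a b a' b' : V, a ∈ A → b ∈ A → a' ∈ A → b' ∈ A →
      H.Adj a b → H.Adj a' b' → s(a, b) = s(a', b'))
    (hBone : ∀ a b a' b' : V, a ∈ B → b ∈ B → a' ∈ B → b' ∈ B →
      H.Adj a b → H.Adj a' b' → s(a, b) = s(a', b'))
    (r s : ℕ) (hr : 1 ≤ r) (hs : 1 ≤ s)
    (hdA : ∀ a ∈ A, H.degree a = r) (hdB : ∀ b ∈ B, H.degree b = s)
    (hnA : ∀ a ∈ A, ∃ b ∈ B, ¬ H.Adj a b)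
    (hnB : ∀ b ∈ B, ∃ a ∈ A, ¬ H.Adj b a) :
    ThreeConnected Hᶜ := by
  have hcard : A.card + B.card = Fintype.card V := by
    rw [← Finset.card_union_of_disjoint hdisj, hunion, Finset.card_univ]
  refine ⟨by omega, fun K hK => ?_⟩
  rcases le_or_gt 6 B.card with h6 | h6
  · exact key H A B hunion hdisj hA h6 hAone hBone r hdA hnA hnB K hK
  · have h6' : 6 ≤ A.card := by omega
    have hunion' : B ∪ A = Finset.univ := by rw [Finset.union_comm]; exact hunion
    exact key H B A hunion' hdisj.symm hB h6' hBone hAone s hdB hnB hnA K hK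
end

section
/- Let H be a non-regular graph with |V(H)| ≥ 12 such that the maximum-degree vertices V_h induce a graph with at most one edge, and the induced subgraph H − V_h (on V_ℓ ∪ V_m) is a member of {P_3, complement of P_3, P_4, claw, co-claw, paw, co-paw, diamond, co-diamond} (in particular |V_ℓ ∪ V_m| ≤ 4). Then no such H exists; more precisely, the assumption ℓ < h is contradicted. -/
open SimpleGraph

/-- The paw: a triangle with a pendant vertex attached. -/
def pawGraph : SimpleGraph (Fin 4) :=
  SimpleGraph.fromRel fun a b =>
    (a = 0 ∧ b = 1) ∨ (a = 0 ∧ b = 2) ∨ (a = 1 ∧ b = 2) ∨ (a = 0 ∧ b = 3)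

/-- The co-diamond: a single edge plus two isolated vertices. -/
def coDiamondGraph : SimpleGraph (Fin 4) :=
  SimpleGraph.fromRel fun a b => a = 0 ∧ b = 1

/-- The diamond: K₄ minus an edge. -/
def diamondGraph : SimpleGraph (Fin 4) := coDiamondGraphᶜ

/-- The claw K_{1,3}. -/
def clawGraph : SimpleGraph (Fin 1 ⊕ Fin 3) := completeBipartiteGraph (Fin 1) (Fin 3)

/-- Membership in the set 𝒴' = {P₃, co-P₃, P₄, claw, co-claw, paw, co-paw, diamond,
co-diamond}, up to isomorphism. -/
def InYPrime {S : Type*} (G : SimpleGraph S) : Prop :=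
  Nonempty (G ≃g pathGraph 3) ∨ Nonempty (G ≃g (pathGraph 3)ᶜ) ∨
  Nonempty (G ≃g pathGraph 4) ∨
  Nonempty (G ≃g clawGraph) ∨ Nonempty (G ≃g clawGraphᶜ) ∨
  Nonempty (G ≃g pawGraph) ∨ Nonempty (G ≃g pawGraphᶜ) ∨
  Nonempty (G ≃g diamondGraph) ∨ Nonempty (G ≃g coDiamondGraph)

/-- Let H be a non-regular graph with |V(H)| ≥ 12 such that the
maximum-degree vertices V_h induce a graph with at most one edge, and the induced
subgraph H − V_h belongs to {P₃, co-P₃, P₄, claw, co-claw, paw, co-paw, diamond,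
co-diamond}.  Then no such H exists: the assumption ℓ < h is contradicted. -/
theorem stmt_10 {V : Type*} [Fintype V] [DecidableEq V] (H : SimpleGraph V)
    [DecidableRel H.Adj]
    (h12 : 12 ≤ Fintype.card V)
    (hnonreg : H.minDegree < H.maxDegree)
    (hVhone : ∀ a b a' b' : V, H.degree a = H.maxDegree → H.degree b = H.maxDegree →
      H.degree a' = H.maxDegree → H.degree b' = H.maxDegree →
      H.Adj a b → H.Adj a' b' → s(a, b) = s(a', b'))
    (hsmall : InYPrime (H.induce {v : V | H.degree v ≠ H.maxDegree})) :
    False := by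
  classical
  have h1 : 1 ≤ H.maxDegree := Nat.lt_of_le_of_lt (Nat.zero_le _) hnonreg
  have hcard4 : Fintype.card {v : V | H.degree v ≠ H.maxDegree} ≤ 4 := by
    rcases hsmall with e|e|e|e|e|e|e|e|e <;>
      · obtain ⟨e⟩ := e
        have := Fintype.card_congr e.toEquiv
        simp only [Fintype.card_fin, Fintype.card_sum] at this
        omega
  set R : Finset V := ({v : V | H.degree v ≠ H.maxDegree} : Set V).toFinset with hR
  have hRcard : R.card ≤ 4 := by
    rw [hR, Set.toFinset_card]; exact hcard4
  have hRdeg : ∀ v ∈ R, H.degree v < H.maxDegree := by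
    intro v hv
    have hne : H.degree v ≠ H.maxDegree := by
      rw [hR, Set.mem_toFinset] at hv; exact hv
    exact lt_of_le_of_ne (H.degree_le_maxDegree v) hne
  set A : Finset V := Rᶜ with hA
  have hAdeg : ∀ v ∈ A, H.degree v = H.maxDegree := by
    intro v hv
    have hvR : v ∉ R := Finset.mem_compl.mp hv
    rw [hR, Set.mem_toFinset] at hvR
    exact not_not.mp hvR
  have hAcard : 8 ≤ A.card := by
    rw [hA, Finset.card_compl]; omega
  obtain ⟨B, hBA, hB6, hBR⟩ :
      ∃ B : Finset V, B ⊆ A ∧ 6 ≤ B.card ∧ ∀ a ∈ B, ∀ w, H.Adj a w → w ∈ R := by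
    by_cases hE : ∃ a b, a ∈ A ∧ b ∈ A ∧ H.Adj a b
    · obtain ⟨a₀, b₀, ha₀, hb₀, hab⟩ := hE
      refine ⟨A \ {a₀, b₀}, Finset.sdiff_subset, ?_, ?_⟩
      · have h2 : ({a₀, b₀} : Finset V).card ≤ 2 := Finset.card_le_two
        have := Finset.le_card_sdiff ({a₀, b₀} : Finset V) A
        omega
      · intro a ha w haw
        by_contra hwR
        have hwA : w ∈ A := Finset.mem_compl.mpr hwR
        have haA : a ∈ A := (Finset.mem_sdiff.mp ha).1
        have heq := hVhone a w a₀ b₀ (hAdeg a haA) (hAdeg w hwA) (hAdeg a₀ ha₀)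
          (hAdeg b₀ hb₀) haw hab
        have hnot : a ∉ ({a₀, b₀} : Finset V) := (Finset.mem_sdiff.mp ha).2
        rw [Sym2.eq_iff] at heq
        rcases heq with ⟨rfl, rfl⟩ | ⟨rfl, rfl⟩ <;> simp at hnot
    · refine ⟨A, le_refl A, by omega, ?_⟩
      intro a ha w haw
      by_contra hwR
      exact hE ⟨a, w, ha, Finset.mem_compl.mpr hwR, haw⟩
  have key : ∀ a ∈ B, (R.filter fun v => H.Adj a v).card = H.maxDegree := by
    intro a ha
    have hsub : R.filter (fun v => H.Adj a v) = H.neighborFinset a := by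
      ext w
      simp only [Finset.mem_filter, SimpleGraph.mem_neighborFinset]
      exact ⟨fun hw => hw.2, fun hw => ⟨hBR a ha w hw, hw⟩⟩
    rw [hsub, SimpleGraph.card_neighborFinset_eq_degree]
    exact hAdeg a (hBA ha)
  have hdouble : ∑ a ∈ B, (R.filter fun v => H.Adj a v).card
      = ∑ v ∈ R, (B.filter fun a => H.Adj a v).card := by
    simp_rw [Finset.card_filter]
    exact Finset.sum_comm
  have hLHS : 6 * H.maxDegree ≤ ∑ a ∈ B, (R.filter fun v => H.Adj a v).card := by
    calc 6 * H.maxDegree ≤ B.card * H.maxDegree := Nat.mul_le_mul_right H.maxDegree hB6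
    _ = ∑ _a ∈ B, H.maxDegree := by rw [Finset.sum_const, smul_eq_mul]
    _ = _ := (Finset.sum_congr rfl fun a ha => (key a ha).symm)
  have hRHS : ∑ v ∈ R, (B.filter fun a => H.Adj a v).card ≤ 4 * (H.maxDegree - 1) := by
    calc ∑ v ∈ R, (B.filter fun a => H.Adj a v).card
        ≤ ∑ _v ∈ R, (H.maxDegree - 1) := by
          refine Finset.sum_le_sum fun v hv => ?_
          have hsub : (B.filter fun a => H.Adj a v) ⊆ H.neighborFinset v := by
            intro a ha
            rw [SimpleGraph.mem_neighborFinset]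
            exact (Finset.mem_filter.mp ha).2.symm
          have hc := Finset.card_le_card hsub
          rw [SimpleGraph.card_neighborFinset_eq_degree] at hc
          have := hRdeg v hv
          omega
    _ = R.card * (H.maxDegree - 1) := by rw [Finset.sum_const, smul_eq_mul]
    _ ≤ 4 * (H.maxDegree - 1) := Nat.mul_le_mul_right _ hRcard
  omega
end

section
/- Suppose a graph H on vertex set V_ℓ ∪ V_h (V_m = ∅) satisfies: V_ℓ induces a graph with at most one edge, V_h induces a graph with at most one edge, every vertex of V_ℓ has degree ℓ ≥ 1, every vertex of V_h has degree h > ℓ, and some vertex of V_ℓ is adjacent to all vertices of V_h. If |V_h| ≥ 3 and V_h induces an empty graph, then every vertex of V_ℓ is adjacent to all vertices of V_h, and hence all vertices of V_ℓ have degree at least |V_h|, forcing all degrees in V_ℓ to differ by at most 1 from |V_h|. -/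
/-- Suppose a graph H on vertex set V_ℓ ∪ V_h (V_m = ∅) satisfies: V_ℓ
induces a graph with at most one edge, V_h induces a graph with at most one edge, every
vertex of V_ℓ has degree ℓ ≥ 1, every vertex of V_h has degree h > ℓ, and some vertex
of V_ℓ is adjacent to all vertices of V_h.  If |V_h| ≥ 3 and V_h induces an empty
graph, then every vertex of V_ℓ is adjacent to all vertices of V_h, and hence all
vertices of V_ℓ have degree at least |V_h| and at most |V_h| + 1. -/
theorem stmt_17 {V : Type*} [Fintype V] [DecidableEq V] (G : SimpleGraph V)
    [DecidableRel G.Adj]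
    (Vl Vh : Finset V) (l h : ℕ)
    (hdisj : Disjoint Vl Vh) (hunion : Vl ∪ Vh = Finset.univ)
    (hVlone : ∀ a b a' b' : V, a ∈ Vl → b ∈ Vl → a' ∈ Vl → b' ∈ Vl →
      G.Adj a b → G.Adj a' b' → s(a, b) = s(a', b'))
    (hVhone : ∀ a b a' b' : V, a ∈ Vh → b ∈ Vh → a' ∈ Vh → b' ∈ Vh →
      G.Adj a b → G.Adj a' b' → s(a, b) = s(a', b'))
    (hdl : ∀ x ∈ Vl, G.degree x = l) (hdh : ∀ x ∈ Vh, G.degree x = h)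
    (hl1 : 1 ≤ l) (hlh : l < h)
    (hw : ∃ w ∈ Vl, ∀ y ∈ Vh, G.Adj w y)
    (h3 : 3 ≤ Vh.card)
    (hVhempty : ∀ x ∈ Vh, ∀ y ∈ Vh, ¬ G.Adj x y) :
    (∀ x ∈ Vl, ∀ y ∈ Vh, G.Adj x y) ∧
    (∀ x ∈ Vl, Vh.card ≤ G.degree x ∧ G.degree x ≤ Vh.card + 1) := by
  classical
  -- degree splits as neighbors in Vl plus neighbors in Vh
  have hsplit : ∀ v : V, G.degree v =
      (G.neighborFinset v ∩ Vl).card + (G.neighborFinset v ∩ Vh).card := by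
    intro v
    rw [← Finset.card_union_of_disjoint
        (hdisj.mono Finset.inter_subset_right Finset.inter_subset_right),
      ← Finset.inter_union_distrib_left, hunion, Finset.inter_univ,
      SimpleGraph.card_neighborFinset_eq_degree]
  -- each vertex of Vl has at most one neighbor in Vl
  have key_le : ∀ v ∈ Vl, (G.neighborFinset v ∩ Vl).card ≤ 1 := by
    intro v hv
    refine Finset.card_le_one.2 ?_
    intro a ha b hb
    simp only [Finset.mem_inter, SimpleGraph.mem_neighborFinset] at ha hb
    have h' := hVlone v a v b hv ha.2 hv hb.2 ha.1 hb.1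
    rw [Sym2.congr_right] at h'
    exact h'
  obtain ⟨w, hwVl, hwadj⟩ := hw
  have hNhw : G.neighborFinset w ∩ Vh = Vh := by
    rw [Finset.inter_eq_right]
    intro z hz
    simp [SimpleGraph.mem_neighborFinset, hwadj z hz]
  have hlge : Vh.card ≤ l := by
    have := hsplit w
    rw [hdl w hwVl, hNhw] at this
    omega
  have hmain : ∀ x ∈ Vl, ∀ y ∈ Vh, G.Adj x y := by
    intro x hx y hy
    by_contra hxy
    have hx1 : (G.neighborFinset x ∩ Vl).card ≤ 1 := key_le x hx
    have hNhx_sub : G.neighborFinset x ∩ Vh ⊆ Vh.erase y := by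
      intro z hz
      simp only [Finset.mem_inter, SimpleGraph.mem_neighborFinset] at hz
      refine Finset.mem_erase.2 ⟨?_, hz.2⟩
      rintro rfl; exact hxy hz.1
    have hNhx_le : (G.neighborFinset x ∩ Vh).card ≤ Vh.card - 1 := by
      have := Finset.card_le_card hNhx_sub
      rwa [Finset.card_erase_of_mem hy] at this
    have hdx := hsplit x
    rw [hdl x hx] at hdx
    have ha1 : (G.neighborFinset x ∩ Vl).card = 1 := by omega
    have hb : (G.neighborFinset x ∩ Vh).card = Vh.card - 1 := by omega
    have hln : l = Vh.card := by omega
    obtain ⟨x', hx'⟩ := Finset.card_eq_one.1 ha1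
    have hx'mem : x' ∈ G.neighborFinset x ∩ Vl := hx' ▸ Finset.mem_singleton_self x'
    simp only [Finset.mem_inter, SimpleGraph.mem_neighborFinset] at hx'mem
    obtain ⟨hadjxx', hx'Vl⟩ := hx'mem
    have hxx' : x ≠ x' := G.ne_of_adj hadjxx'
    -- x' has exactly one neighbor in Vl
    have hx'l1 : (G.neighborFinset x' ∩ Vl).card = 1 := by
      have hle := key_le x' hx'Vl
      have hmemx : x ∈ G.neighborFinset x' ∩ Vl := by
        simp [SimpleGraph.mem_neighborFinset, hadjxx'.symm, hx]
      have := Finset.card_pos.2 ⟨x, hmemx⟩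
      omega
    have hdx' := hsplit x'
    rw [hdl x' hx'Vl] at hdx'
    have hx'h : (G.neighborFinset x' ∩ Vh).card = Vh.card - 1 := by omega
    -- find z ∈ Vh, z ≠ y, adjacent to x'
    have hne : ((G.neighborFinset x' ∩ Vh).erase y).Nonempty := by
      apply Finset.card_pos.1
      have := Finset.pred_card_le_card_erase (s := G.neighborFinset x' ∩ Vh) (a := y)
      omega
    obtain ⟨z, hz⟩ := hne
    have hzny : z ≠ y := Finset.ne_of_mem_erase hz
    have hz' := Finset.mem_of_mem_erase hz
    simp only [Finset.mem_inter, SimpleGraph.mem_neighborFinset] at hz'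
    obtain ⟨hadjx'z, hzVh⟩ := hz'
    -- x is adjacent to z since Nh x = Vh.erase y
    have hNhx_eq : G.neighborFinset x ∩ Vh = Vh.erase y :=
      Finset.eq_of_subset_of_card_le hNhx_sub
        (by rw [hb, Finset.card_erase_of_mem hy])
    have hadjxz : G.Adj x z := by
      have hzm : z ∈ Vh.erase y := Finset.mem_erase.2 ⟨hzny, hzVh⟩
      rw [← hNhx_eq, Finset.mem_inter, SimpleGraph.mem_neighborFinset] at hzm
      exact hzm.1
    -- set S
    set A := (G.neighborFinset y).erase x' with hA
    have hxnA : x ∉ A := by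
      intro hxA
      have := Finset.mem_of_mem_erase hxA
      rw [SimpleGraph.mem_neighborFinset] at this
      exact hxy this.symm
    have hcardA : G.degree y - 1 ≤ A.card := by
      have := Finset.pred_card_le_card_erase (s := G.neighborFinset y) (a := x')
      rw [SimpleGraph.card_neighborFinset_eq_degree] at this
      exact this
    have hsub : insert x (insert x' A) ⊆ G.neighborFinset z := by
      intro v hv
      rw [SimpleGraph.mem_neighborFinset]
      rcases Finset.mem_insert.1 hv with rfl | hv1
      · exact hadjxz.symm
      rcases Finset.mem_insert.1 hv1 with rfl | hv2
      · exact hadjx'z.symm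
      -- v ∈ A : adjacent to y, v ≠ x'
      have hvny := Finset.ne_of_mem_erase hv2
      have hvNy := Finset.mem_of_mem_erase hv2
      rw [SimpleGraph.mem_neighborFinset] at hvNy
      have hvnx : v ≠ x := by rintro rfl; exact hxnA hv2
      -- v ∈ Vl
      have hvVl : v ∈ Vl := by
        have hvu : v ∈ Vl ∪ Vh := by rw [hunion]; exact Finset.mem_univ v
        rcases Finset.mem_union.1 hvu with h' | h'
        · exact h'
        · exact absurd hvNy.symm (hVhempty v h' y hy)
      -- v has no neighbor in Vl
      have hvNl : G.neighborFinset v ∩ Vl = ∅ := by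
        by_contra hne'
        obtain ⟨u, hu⟩ := Finset.nonempty_of_ne_empty hne'
        simp only [Finset.mem_inter, SimpleGraph.mem_neighborFinset] at hu
        have heq := hVlone v u x x' hvVl hu.2 hx hx'Vl hu.1 hadjxx'
        rw [Sym2.eq_iff] at heq
        rcases heq with ⟨h1, _⟩ | ⟨h1, _⟩
        · exact hvnx h1
        · exact hvny h1
      have hdv := hsplit v
      rw [hdl v hvVl, hvNl, Finset.card_empty] at hdv
      have hNhv : G.neighborFinset v ∩ Vh = Vh := by
        apply Finset.eq_of_subset_of_card_le Finset.inter_subset_right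
        omega
      have : z ∈ G.neighborFinset v ∩ Vh := by rw [hNhv]; exact hzVh
      rw [Finset.mem_inter, SimpleGraph.mem_neighborFinset] at this
      exact this.1.symm
    have hcardS : A.card + 2 ≤ (G.neighborFinset z).card := by
      have hcard := Finset.card_le_card hsub
      rw [Finset.card_insert_of_notMem, Finset.card_insert_of_notMem] at hcard
      · omega
      · exact Finset.notMem_erase x' (G.neighborFinset y)
      · simp only [Finset.mem_insert]
        push_neg
        exact ⟨hxx', hxnA⟩
    rw [SimpleGraph.card_neighborFinset_eq_degree, hdh z hzVh] at hcardS
    have hdy := hdh y hy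
    omega
  refine ⟨hmain, fun x hx => ?_⟩
  have hNhx : G.neighborFinset x ∩ Vh = Vh := by
    rw [Finset.inter_eq_right]
    intro z hz
    rw [SimpleGraph.mem_neighborFinset]
    exact hmain x hx z hz
  have := hsplit x
  rw [hNhx] at this
  have := key_le x hx
  omega
end
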